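/- If s, D > 0 satisfy 4·cosh(s/2) ≤ 3·cosh(D) − 1 and moreover cosh(s/2) ≤ 1/(2·sin(π/(12g−6))) for an integer g ≥ 2, then s/D ≤ 2·arccosh(1/(2 sin(π/(12g−6)))) / arccosh(2/(3 sin(π/(12g−6))) + 1/3). -/

import Mathlib

/-! Put `u = s / 2` and `φ u = arccosh ((4 cosh u + 1) / 3)`. The main inequality says `φ u ≤ D`,
so `s / D ≤ 2 u / φ u`. Since `u ≤ φ u` and `φ` is 1-Lipschitz on `[0, ∞)`, the ratio `u / φ u`
is nondecreasing there; Bavard's bound `cosh u ≤ B` gives `u ≤ arccosh B`, and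
`φ (arccosh B) = arccosh ((4 B + 1) / 3)`. -/

open Real

noncomputable def arccosh (x : ℝ) : ℝ := Real.log (x + Real.sqrt (x ^ 2 - 1))

lemma arccosh_eq_arcosh : arccosh = arcosh := rfl

namespace Real

lemma arcosh_le_of_le_cosh {x y : ℝ} (hx : 0 ≤ x) (hy : 0 < y) (h : y ≤ cosh x) :
    arcosh y ≤ x := by
  simpa only [arcosh_cosh hx] using (arcosh_le_arcosh hy (cosh_pos x)).2 h

lemma le_arcosh_of_cosh_le {x y : ℝ} (hx : 0 ≤ x) (h : cosh x ≤ y) : x ≤ arcosh y := by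
  simpa only [arcosh_cosh hx] using
    (arcosh_le_arcosh (cosh_pos x) ((cosh_pos x).trans_le h)).2 h

end Real

lemma one_le_cosh_affine (u : ℝ) : 1 ≤ (4 * cosh u + 1) / 3 := by
  linarith [one_le_cosh u]

lemma self_le_arcosh_cosh_affine {u : ℝ} (hu : 0 ≤ u) : u ≤ arcosh ((4 * cosh u + 1) / 3) :=
  le_arcosh_of_cosh_le hu (by linarith [one_le_cosh u])

lemma four_thirds_sinh_le_sinh_arcosh_cosh_affine {u : ℝ} (hu : 0 ≤ u) :
    4 / 3 * sinh u ≤ sinh (arcosh ((4 * cosh u + 1) / 3)) := by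
  rw [sinh_arcosh (one_le_cosh_affine u),
    le_sqrt (by have := sinh_nonneg_iff.2 hu; positivity) (by nlinarith [one_le_cosh_affine u]),
    mul_pow, sinh_sq]
  nlinarith [one_le_cosh u]

lemma arcosh_cosh_affine_le_add {u v : ℝ} (hu : 0 ≤ u) (huv : u ≤ v) :
    arcosh ((4 * cosh v + 1) / 3) ≤ arcosh ((4 * cosh u + 1) / 3) + (v - u) := by
  set A := arcosh ((4 * cosh u + 1) / 3)
  have hA : cosh A = (4 * cosh u + 1) / 3 := cosh_arcosh (one_le_cosh_affine u)
  have hsinhA : 4 / 3 * sinh u ≤ sinh A := four_thirds_sinh_le_sinh_arcosh_cosh_affine hu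
  have hw : 0 ≤ sinh (v - u) := sinh_nonneg_iff.2 (sub_nonneg.2 huv)
  have hcosh : (4 * cosh v + 1) / 3 ≤ cosh (A + (v - u)) := by
    have hv : v = u + (v - u) := by ring
    rw [hv, cosh_add u, cosh_add, hA, ← hv]
    nlinarith [mul_le_mul_of_nonneg_right hsinhA hw, one_le_cosh (v - u)]
  exact arcosh_le_of_le_cosh (by linarith [self_le_arcosh_cosh_affine hu])
    (by linarith [one_le_cosh_affine v]) hcosh

lemma div_arcosh_cosh_affine_le {u v : ℝ} (hu : 0 < u) (huv : u ≤ v) :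
    u / arcosh ((4 * cosh u + 1) / 3) ≤ v / arcosh ((4 * cosh v + 1) / 3) := by
  have hPu := self_le_arcosh_cosh_affine hu.le
  have hQv := self_le_arcosh_cosh_affine (hu.le.trans huv)
  have hQP := arcosh_cosh_affine_le_add hu.le huv
  rw [div_le_div_iff₀ (by linarith) (by linarith)]
  nlinarith [mul_le_mul_of_nonneg_left hQP hu.le, mul_le_mul_of_nonneg_right huv (hu.le.trans hPu)]

lemma div_le_of_cosh_half_le {s D B : ℝ} (hs : 0 < s) (hD : 0 < D)
    (hmain : 4 * cosh (s / 2) ≤ 3 * cosh D - 1) (hB : cosh (s / 2) ≤ B) :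
    s / D ≤ 2 * arcosh B / arcosh ((4 * B + 1) / 3) := by
  set u := s / 2
  have hu : 0 < u := by positivity
  have hv : cosh (arcosh B) = B := cosh_arcosh ((one_le_cosh u).trans hB)
  have huv : u ≤ arcosh B := le_arcosh_of_cosh_le hu.le hB
  have hPu := self_le_arcosh_cosh_affine hu.le
  have hPD : arcosh ((4 * cosh u + 1) / 3) ≤ D :=
    arcosh_le_of_le_cosh hD.le (by linarith [one_le_cosh_affine u]) (by linarith)
  calc s / D ≤ s / arcosh ((4 * cosh u + 1) / 3) :=
        div_le_div_of_nonneg_left hs.le (by linarith) hPD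
    _ = 2 * (u / arcosh ((4 * cosh u + 1) / 3)) := by ring
    _ ≤ 2 * (arcosh B / arcosh ((4 * cosh (arcosh B) + 1) / 3)) := by
        gcongr 2 * ?_; exact div_arcosh_cosh_affine_le hu huv
    _ = 2 * arcosh B / arcosh ((4 * B + 1) / 3) := by rw [hv]; ring

theorem ratio_bound_genus_g_general (g : ℕ) (s D : ℝ) (hs : 0 < s) (hD : 0 < D)
    (hmain : 4 * Real.cosh (s / 2) ≤ 3 * Real.cosh D - 1)
    (hbavard : Real.cosh (s / 2) ≤ 1 / (2 * Real.sin (π / (12 * (g : ℝ) - 6)))) :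
    s / D ≤ 2 * arccosh (1 / (2 * Real.sin (π / (12 * (g : ℝ) - 6))))
      / arccosh (2 / (3 * Real.sin (π / (12 * (g : ℝ) - 6))) + 1 / 3) := by
  rw [arccosh_eq_arcosh]
  convert div_le_of_cosh_half_le hs hD hmain hbavard using 4
  ring

theorem ratio_bound_genus_g (g : ℕ) (hg : 2 ≤ g) (s D : ℝ) (hs : 0 < s) (hD : 0 < D)
    (hmain : 4 * Real.cosh (s / 2) ≤ 3 * Real.cosh D - 1)
    (hbavard : Real.cosh (s / 2) ≤ 1 / (2 * Real.sin (π / (12 * (g : ℝ) - 6)))) :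
    s / D ≤ 2 * arccosh (1 / (2 * Real.sin (π / (12 * (g : ℝ) - 6))))
      / arccosh (2 / (3 * Real.sin (π / (12 * (g : ℝ) - 6))) + 1 / 3) :=
  ratio_bound_genus_g_general g s D hs hD hmain hbavard
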